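/- arXiv:2205.05947 — 4 statements merged into one kernel-verified Lean document; each statement's English description precedes it below -/
import Mathlib

section
/- If a finite simple graph G admits an interval edge-coloring, then the edge-chromatic number of G equals its maximum degree Δ(G) (i.e., G is Class 1). -/
/-- `c` is an interval edge-coloring of `G`: a proper edge-coloring (adjacent edges get
distinct colors) such that at every vertex the set of incident colors is a set of
consecutive integers. -/
def IsIntervalColoring {V : Type*} (G : SimpleGraph V) (c : Sym2 V → ℤ) : Prop :=
  (∀ e ∈ G.edgeSet, ∀ f ∈ G.edgeSet, e ≠ f → (∃ v, v ∈ e ∧ v ∈ f) → c e ≠ c f) ∧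
  (∀ v : V, ∀ x y z : ℤ, x ≤ y → y ≤ z →
    (∃ e ∈ G.edgeSet, v ∈ e ∧ c e = x) → (∃ e ∈ G.edgeSet, v ∈ e ∧ c e = z) →
    ∃ e ∈ G.edgeSet, v ∈ e ∧ c e = y)

/-- `G` admits an interval edge-coloring. -/
def IntervalColorable {V : Type*} (G : SimpleGraph V) : Prop :=
  ∃ c : Sym2 V → ℤ, IsIntervalColoring G c

/-- The interval thickness of `G` is at most `k`: the edge set of `G` can be partitioned
into `k` classes, each of which spans an interval colorable graph. -/
def IntervalThicknessLE {V : Type*} (G : SimpleGraph V) (k : ℕ) : Prop :=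
  ∃ f : Sym2 V → Fin k,
    ∀ i : Fin k,
      IntervalColorable (SimpleGraph.fromEdgeSet {e | e ∈ G.edgeSet ∧ f e = i})

/-- The density of the pair `(X, Y)` in `G`, as a real number. -/
noncomputable def dens {V : Type*} (G : SimpleGraph V) [DecidableRel G.Adj]
    (X Y : Finset V) : ℝ :=
  (G.edgeDensity X Y : ℝ)

/-- `(X, Y)` is an `ε`-regular pair in `G`:
`|d(X,Y) - d(A,B)| ≤ ε` for all `A ⊆ X`, `B ⊆ Y` with `|A| ≥ ε|X|`, `|B| ≥ ε|Y|`. -/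
def EpsRegular {V : Type*} (G : SimpleGraph V) [DecidableRel G.Adj]
    (ε : ℝ) (X Y : Finset V) : Prop :=
  ∀ A ⊆ X, ∀ B ⊆ Y, ε * X.card ≤ A.card → ε * Y.card ≤ B.card →
    |dens G X Y - dens G A B| ≤ ε

/-!
Proper edge-colorings are the vertex colorings of the line graph. Such a coloring needs
`Δ` colors at a vertex of maximum degree. Conversely, reduce an interval coloring modulo `Δ`:
the colors at a vertex `v` fill an interval of `deg v ≤ Δ` integers, so two distinct ones
cannot agree modulo `Δ`.
-/

namespace SimpleGraph

variable {V : Type*} {G : SimpleGraph V}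

theorem lineGraph_colorable_iff {n : ℕ} :
    G.lineGraph.Colorable n ↔ ∃ C : G.edgeSet → Fin n,
      ∀ e f : G.edgeSet, e ≠ f → (∃ v, v ∈ (e : Sym2 V) ∧ v ∈ (f : Sym2 V)) → C e ≠ C f :=
  ⟨fun ⟨C⟩ => ⟨C, fun _ _ hne hv => C.valid (lineGraph_adj_iff_exists.2 ⟨hne, hv⟩)⟩,
    fun ⟨C, hC⟩ => ⟨Coloring.mk C fun hadj => hC _ _ (lineGraph_adj_iff_exists.1 hadj).1
      (lineGraph_adj_iff_exists.1 hadj).2⟩⟩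

theorem degree_le_of_lineGraph_colorable {n : ℕ} (h : G.lineGraph.Colorable n) (v : V)
    [Fintype (G.neighborSet v)] : G.degree v ≤ n := by
  classical
  obtain ⟨C⟩ := h
  have hinj : Function.Injective fun e : G.incidenceSet v => C ⟨e, e.2.1⟩ := by
    intro e₁ e₂ heq
    by_contra hne
    have hne' : (⟨e₁, e₁.2.1⟩ : G.edgeSet) ≠ ⟨e₂, e₂.2.1⟩ := by
      simpa [Subtype.ext_iff] using hne
    exact C.valid (lineGraph_adj_iff_exists.2 ⟨hne', v, e₁.2.2, e₂.2.2⟩) heq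
  calc G.degree v = Fintype.card (G.incidenceSet v) := (card_incidenceSet_eq_degree G v).symm
    _ ≤ Fintype.card (Fin n) := Fintype.card_le_of_injective _ hinj
    _ = n := Fintype.card_fin n

end SimpleGraph

open SimpleGraph

namespace IsIntervalColoring

variable {V : Type*} {G : SimpleGraph V} {c : Sym2 V → ℤ}

theorem abs_sub_lt_degree (hc : IsIntervalColoring G c) {v : V} [Fintype (G.neighborSet v)]
    {e f : Sym2 V} (he : e ∈ G.edgeSet) (hf : f ∈ G.edgeSet) (hve : v ∈ e) (hvf : v ∈ f) :
    |c e - c f| < G.degree v := by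
  classical
  wlog hle : c f ≤ c e generalizing e f
  · rw [abs_sub_comm]
    exact this hf he hvf hve (le_of_not_ge hle)
  have hIcc : Finset.Icc (c f) (c e) ⊆ (G.incidenceFinset v).image c := by
    intro y hy
    obtain ⟨g, hg, hvg, rfl⟩ := hc.2 v (c f) y (c e) (Finset.mem_Icc.1 hy).1
      (Finset.mem_Icc.1 hy).2 ⟨f, hf, hvf, rfl⟩ ⟨e, he, hve, rfl⟩
    exact Finset.mem_image_of_mem c ((mem_incidenceFinset G v g).2 ⟨hg, hvg⟩)
  have hcard := (Finset.card_le_card hIcc).trans Finset.card_image_le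
  rw [Int.card_Icc, card_incidenceFinset_eq_degree] at hcard
  rw [abs_of_nonneg (sub_nonneg.2 hle)]
  omega

theorem lineGraph_colorable_maxDegree [Fintype V] [DecidableRel G.Adj]
    (hc : IsIntervalColoring G c) : G.lineGraph.Colorable G.maxDegree := by
  have hlt {e f : G.edgeSet} {v : V} (hve : v ∈ (e : Sym2 V)) (hvf : v ∈ (f : Sym2 V)) :
      |c e - c f| < G.maxDegree :=
    (hc.abs_sub_lt_degree e.2 f.2 hve hvf).trans_le (mod_cast G.degree_le_maxDegree v)
  have hpos (e : G.edgeSet) : (0 : ℤ) < G.maxDegree := by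
    simpa using hlt (Sym2.out_fst_mem (e : Sym2 V)) (Sym2.out_fst_mem (e : Sym2 V))
  rw [colorable_iff_exists_bdd_nat_coloring]
  refine ⟨Coloring.mk (fun e => (c e % G.maxDegree).toNat) fun {e f} hadj => ?_, fun e => ?_⟩
  · obtain ⟨hne, v, hve, hvf⟩ := lineGraph_adj_iff_exists.1 hadj
    have hcne : c e ≠ c f := hc.1 _ e.2 _ f.2 (Subtype.coe_ne_coe.2 hne) ⟨v, hve, hvf⟩
    intro hmod
    have hmod' : c f ≡ c e [ZMOD G.maxDegree] := by
      change (c e % G.maxDegree).toNat = (c f % G.maxDegree).toNat at hmod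
      have := Int.emod_nonneg (c e) (hpos e).ne'
      have := Int.emod_nonneg (c f) (hpos e).ne'
      unfold Int.ModEq
      omega
    exact hcne (sub_eq_zero.1 (Int.eq_zero_of_abs_lt_dvd hmod'.dvd (hlt hve hvf)))
  · have := Int.emod_lt_of_pos (c e) (hpos e)
    have := Int.emod_nonneg (c e) (hpos e).ne'
    show (c e % G.maxDegree).toNat < G.maxDegree
    omega

end IsIntervalColoring

theorem stmt2_general {V : Type*} [Fintype V] (G : SimpleGraph V)
    [DecidableRel G.Adj] (h : IntervalColorable G) :
    IsLeast {n : ℕ | ∃ C : G.edgeSet → Fin n,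
        ∀ e f : G.edgeSet, e ≠ f →
          (∃ v, v ∈ (e : Sym2 V) ∧ v ∈ (f : Sym2 V)) → C e ≠ C f}
      G.maxDegree := by
  obtain ⟨c, hc⟩ := h
  exact ⟨lineGraph_colorable_iff.1 hc.lineGraph_colorable_maxDegree, fun n hn =>
    G.maxDegree_le_of_forall_degree_le n fun v =>
      degree_le_of_lineGraph_colorable (lineGraph_colorable_iff.2 hn) v⟩

/-- If `G` admits an interval edge-coloring, then its edge-chromatic number equals
its maximum degree, i.e. `Δ(G)` is the least number of colors of a proper edge-coloring. -/
theorem stmt2 {V : Type*} [Fintype V] [DecidableEq V] (G : SimpleGraph V)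
    [DecidableRel G.Adj] (h : IntervalColorable G) :
    IsLeast {n : ℕ | ∃ C : G.edgeSet → Fin n,
        ∀ e f : G.edgeSet, e ≠ f →
          (∃ v, v ∈ (e : Sym2 V) ∧ v ∈ (f : Sym2 V)) → C e ≠ C f}
      G.maxDegree :=
  stmt2_general G h
end

section
/- Every finite tree admits an interval edge-coloring. -/
/-!
A finite forest with an edge has a leaf `v`, with unique neighbour `u`. Colour the forest
without the edge `uv` by induction, then give `uv` the colour one above the largest colour
at `u` (or any colour if `u` has none): the colours at `u` stay consecutive, `v` sees a
single colour, and nothing else changes.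
-/

open SimpleGraph Set

theorem Set.Finite.exists_forall_lt_ordConnected_insert {S : Set ℤ} (hfin : S.Finite)
    (hS : S.OrdConnected) : ∃ m, (∀ a ∈ S, a < m) ∧ (insert m S).OrdConnected := by
  rcases S.eq_empty_or_nonempty with rfl | hne
  · exact ⟨0, by simp, by simpa using ordConnected_singleton⟩
  obtain ⟨b, hb, hmax⟩ := exists_max_image S id hfin hne
  refine ⟨b + 1, fun a ha => Int.lt_add_one_of_le (hmax a ha), ordConnected_iff.2 ?_⟩
  rintro x (rfl | hx) y (rfl | hy) hxy z ⟨hxz, hzy⟩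
  · exact .inl (le_antisymm hzy hxz)
  · exact absurd (hmax y hy) (by simp only [id]; omega)
  · rcases eq_or_lt_of_le hzy with rfl | hzb
    · exact .inl rfl
    · exact .inr (hS.out hx hb ⟨hxz, Int.lt_add_one_iff.1 hzb⟩)
  · exact .inr (hS.out hx hy ⟨hxz, hzy⟩)

section

variable {V : Type*} {G : SimpleGraph V}

namespace SimpleGraph

theorem incidenceSet_sup_edge {u v w : V} (huv : u ≠ v) :
    (G ⊔ edge u v).incidenceSet w = G.incidenceSet w ∪ ({s(u, v)} ∩ {f | w ∈ f}) := by
  ext f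
  simp only [incidenceSet, edgeSet_sup, edgeSet_edge_of_ne huv, mem_union, mem_inter_iff,
    mem_ofPred_eq, mem_singleton_iff]
  tauto

theorem IsAcyclic.exists_existsUnique_adj [Finite V] (hG : G.IsAcyclic)
    (hE : G.edgeSet.Nonempty) : ∃ v, ∃! u, G.Adj v u := by
  obtain ⟨e, he⟩ := hE
  induction e using Sym2.ind with | _ a b =>
  rw [mem_edgeSet] at he
  have : Nonempty V := ⟨a⟩
  obtain ⟨u, v, p, hp, hlongest⟩ := Walk.exists_isPath_forall_isPath_length_le_length G
  have hp_not_nil : ¬p.Nil := fun hnil => by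
    have := hlongest _ _ _ (Walk.IsPath.nil.cons (p := Walk.nil) (h := he) (by simpa using he.ne))
    rw [Walk.length_cons, Walk.length_nil, hnil.length_eq_zero] at this
    omega
  refine ⟨u, p.snd, p.adj_snd hp_not_nil, fun w hw => hG.eq_snd_of_adj_start hp hw ?_⟩
  by_contra hw_p
  simpa using hlongest _ _ (p.cons hw.symm) (hp.cons hw_p)

end SimpleGraph

theorem isIntervalColoring_iff {c : Sym2 V → ℤ} :
    IsIntervalColoring G c ↔
      ∀ v, InjOn c (G.incidenceSet v) ∧ (c '' G.incidenceSet v).OrdConnected := by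
  constructor
  · rintro ⟨hproper, hinterval⟩ v
    refine ⟨fun e he f hf hef => ?_, ⟨?_⟩⟩
    · by_contra hne
      exact hproper e he.1 f hf.1 hne ⟨v, he.2, hf.2⟩ hef
    · rintro _ ⟨e, he, rfl⟩ _ ⟨f, hf, rfl⟩ y ⟨hey, hyf⟩
      obtain ⟨g, hg, hgv, rfl⟩ :=
        hinterval v _ y _ hey hyf ⟨e, he.1, he.2, rfl⟩ ⟨f, hf.1, hf.2, rfl⟩
      exact ⟨g, ⟨hg, hgv⟩, rfl⟩
  · intro h
    refine ⟨fun e he f hf hne ⟨v, hev, hfv⟩ hef => hne ((h v).1 ⟨he, hev⟩ ⟨hf, hfv⟩ hef), ?_⟩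
    rintro v x y z hxy hyz ⟨e, he, hev, rfl⟩ ⟨f, hf, hfv, rfl⟩
    obtain ⟨g, hg, rfl⟩ := (h v).2.out ⟨e, ⟨he, hev⟩, rfl⟩ ⟨f, ⟨hf, hfv⟩, rfl⟩ ⟨hxy, hyz⟩
    exact ⟨g, hg.1, hg.2, rfl⟩

theorem IntervalColorable.sup_edge_of_isIsolated {u v : V} (hG : IntervalColorable G)
    (hu : (G.incidenceSet u).Finite) (hv : G.IsIsolated v) (huv : u ≠ v) :
    IntervalColorable (G ⊔ edge u v) := by
  classical
  obtain ⟨c, hc⟩ := hG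
  rw [isIntervalColoring_iff] at hc
  obtain ⟨m, hm, hm_ord⟩ := (hu.image c).exists_forall_lt_ordConnected_insert (hc u).2
  have he : s(u, v) ∉ G.edgeSet := fun h => hv u h.symm
  have hagree : ∀ w, EqOn (Function.update c s(u, v) m) c (G.incidenceSet w) := fun w f hf =>
    Function.update_of_ne (ne_of_mem_of_not_mem (G.incidenceSet_subset w hf) he) _ _
  refine ⟨Function.update c s(u, v) m, isIntervalColoring_iff.2 fun w => ?_⟩
  rw [incidenceSet_sup_edge huv]
  by_cases hwv : w = v
  · subst hwv
    have : G.incidenceSet w = ∅ :=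
      eq_empty_of_forall_notMem fun f hf => hv _ (G.incidence_other_prop hf)
    rw [this, empty_union, singleton_inter_of_mem (s := {f | w ∈ f}) (Sym2.mem_mk_right u w)]
    simp [ordConnected_singleton]
  by_cases hwu : w = u
  · subst hwu
    rw [singleton_inter_of_mem (s := {f | w ∈ f}) (Sym2.mem_mk_left w v), union_singleton,
      image_insert_eq, Function.update_self, (hagree w).image_eq,
      injOn_insert fun h => he (G.incidenceSet_subset w h), Function.update_self,
      (hagree w).image_eq]
    exact ⟨⟨(hc w).1.congr (hagree w).symm, fun h => lt_irrefl m (hm m h)⟩, hm_ord⟩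
  · rw [singleton_inter_eq_empty.2 (by simp [hwu, hwv]), union_empty, (hagree w).image_eq]
    exact ⟨(hc w).1.congr (hagree w).symm, (hc w).2⟩

theorem SimpleGraph.IsAcyclic.intervalColorable [Finite V] (hG : G.IsAcyclic) :
    IntervalColorable G := by
  induction G using WellFoundedLT.induction with | _ G ih =>
  rcases G.edgeSet.eq_empty_or_nonempty with hE | hE
  · refine ⟨0, isIntervalColoring_iff.2 fun v => ?_⟩
    simp [eq_empty_of_subset_empty (hE ▸ G.incidenceSet_subset v), ordConnected_empty]
  obtain ⟨v, u, hvu, hu⟩ := hG.exists_existsUnique_adj hE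
  have hle : edge u v ≤ G := (edge_le_iff _).2 (.inr hvu.symm)
  have hlt : G \ edge u v < G := sdiff_lt hle fun h => by
    simpa [h] using (edge_adj u v u v).2 ⟨.inl ⟨rfl, rfl⟩, hvu.ne.symm⟩
  have hiso : (G \ edge u v).IsIsolated v := fun w ⟨hw, hne⟩ =>
    hne ((hu w hw).symm ▸ (edge_adj u v v u).2 ⟨.inr ⟨rfl, rfl⟩, hvu.ne⟩)
  have := (ih _ hlt (hG.anti sdiff_le)).sup_edge_of_isIsolated (toFinite _) hiso hvu.ne.symm
  rwa [sdiff_sup_cancel hle] at this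

end

/-- Every finite tree admits an interval edge-coloring. -/
theorem stmt4 {V : Type*} [Fintype V] (G : SimpleGraph V) (h : G.IsTree) :
    IntervalColorable G :=
  h.isAcyclic.intervalColorable
end

section
/- Let G be a graph and (X, Y) an ε-regular pair in G with density d > 4ε and |X| = |Y| = n, where 0 < ε < 1/2. Then there exist subsets X' ⊆ X and Y' ⊆ Y with |X'| = |Y'| > (1 - ε)n such that (X', Y') is a 3ε-regular pair with density d' satisfying d - ε ≤ d' ≤ d + ε, and every vertex of X' has at least (d' - 3ε)|X'| neighbors in Y' and vice versa. -/
/-!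
In an `ε`-regular pair `(X, Y)` of density `d`, fewer than `ε|X|` vertices of `X` have fewer than
`(d - ε)|Y|` neighbours in `Y`: those vertices would form a set `A` with `d(A, Y) < d - ε`.
The same holds with the roles of `X` and `Y` swapped. Discarding the low-degree vertices and
trimming both sides to a common size `m > (1 - ε)n` removes fewer than `εn` neighbours of any
remaining vertex, so its degree stays above `(d - 2ε)m ≥ (d' - 3ε)m`. As `m > n/2`, subsets of
relative size `3ε` in the new pair have relative size at least `ε` in the old one, so their
densities are within `ε` of `d`, hence within `2ε` of `d'`.
-/

open scoped Finset

lemma Finset.card_filter_le_card_filter_add_card_sdiff {α : Type*} [DecidableEq α]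
    (p : α → Prop) [DecidablePred p] (s t : Finset α) :
    #(s.filter p) ≤ #(t.filter p) + #(s \ t) := by
  calc #(s.filter p) ≤ #(s.filter p \ t.filter p) + #(t.filter p) :=
        Finset.card_le_card_sdiff_add_card
    _ ≤ #(s \ t) + #(t.filter p) := by
        gcongr ?_ + _
        exact Finset.card_le_card fun x => by simp only [Finset.mem_sdiff, Finset.mem_filter]; tauto
    _ = #(t.filter p) + #(s \ t) := add_comm _ _

section

variable {V : Type*} (G : SimpleGraph V) [DecidableRel G.Adj]

lemma dens_comm (A B : Finset V) : dens G A B = dens G B A := by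
  rw [dens, dens, G.edgeDensity_comm]

lemma card_interedges_eq_sum_card_filter_adj [DecidableEq V] (A B : Finset V) :
    #(G.interedges A B) = ∑ x ∈ A, #(B.filter (G.Adj x)) := by
  simp only [SimpleGraph.interedges_def, Finset.card_filter, Finset.sum_product]

lemma dens_mul_card_mul_card (A B : Finset V) :
    dens G A B * (#A * #B) = ∑ x ∈ A, (#(B.filter (G.Adj x)) : ℝ) := by
  classical
  have hle : (#(G.interedges A B) : ℝ) ≤ #A * #B := by
    exact_mod_cast G.card_interedges_le_mul A B
  rw [dens, SimpleGraph.edgeDensity_def]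
  push_cast
  -- if `#A * #B = 0` the junk value of the division is harmless, as there are no edges either
  rw [div_mul_cancel_of_imp fun h => le_antisymm (h ▸ hle) (Nat.cast_nonneg _),
    card_interedges_eq_sum_card_filter_adj, Nat.cast_sum]

lemma le_card_filter_adj_of_subset {ε d : ℝ} {x : V} {Y Y' : Finset V} (hY' : Y' ⊆ Y)
    (hbig : (1 - ε) * #Y < #Y') (hd : 2 * ε ≤ d)
    (hdeg : (d - ε) * #Y ≤ #(Y.filter (G.Adj x))) :
    (d - 2 * ε) * #Y' ≤ #(Y'.filter (G.Adj x)) := by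
  classical
  have hlost : (#(Y.filter (G.Adj x)) : ℝ) ≤ #(Y'.filter (G.Adj x)) + (#Y - #Y') := by
    have := Finset.card_filter_le_card_filter_add_card_sdiff (G.Adj x) Y Y'
    rw [Finset.card_sdiff_of_subset hY'] at this
    have := Nat.cast_le (α := ℝ) |>.2 this
    push_cast [Nat.cast_sub (Finset.card_le_card hY')] at this
    linarith
  have hle : (#Y' : ℝ) ≤ #Y := by exact_mod_cast Finset.card_le_card hY'
  nlinarith [mul_nonneg (sub_nonneg.2 hd) (sub_nonneg.2 hle)]

variable {G}

lemma EpsRegular.symm {ε : ℝ} {X Y : Finset V} (h : EpsRegular G ε X Y) : EpsRegular G ε Y X :=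
  fun B hB A hA hB' hA' => by
    simpa only [dens_comm G Y, dens_comm G B] using h A hA B hB hA' hB'

lemma EpsRegular.of_subset {ε δ : ℝ} {X Y X' Y' : Finset V} (h : EpsRegular G ε X Y)
    (hX' : X' ⊆ X) (hY' : Y' ⊆ Y) (hXc : ε * #X ≤ #X') (hYc : ε * #Y ≤ #Y')
    (hδX : ε * #X ≤ δ * #X') (hδY : ε * #Y ≤ δ * #Y') (hεδ : 2 * ε ≤ δ) :
    EpsRegular G δ X' Y' := by
  intro A hA B hB hAc hBc
  have h₁ := abs_le.1 (h X' hX' Y' hY' hXc hYc)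
  have h₂ := abs_le.1 (h A (hA.trans hX') B (hB.trans hY') (hδX.trans hAc) (hδY.trans hBc))
  rw [abs_le]
  constructor <;> linarith

lemma EpsRegular.exists_large_subset_forall_degree_ge {ε : ℝ} {X Y : Finset V}
    (h : EpsRegular G ε X Y) (hε : 0 < ε) (hε1 : ε ≤ 1) (hX : X.Nonempty) :
    ∃ X₀ ⊆ X, (1 - ε) * #X < #X₀ ∧
      ∀ x ∈ X₀, (dens G X Y - ε) * #Y ≤ #(Y.filter (G.Adj x)) := by
  set d := dens G X Y
  set p : V → Prop := fun x => (d - ε) * #Y ≤ #(Y.filter (G.Adj x))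
  refine ⟨X.filter p, Finset.filter_subset _ _, ?_, fun x hx => (Finset.mem_filter.1 hx).2⟩
  by_contra! hsmall
  set A := X.filter fun x => ¬ p x
  have hA : ε * #X ≤ #A := by
    have := Finset.card_filter_add_card_filter_not (s := X) p
    have := congrArg (Nat.cast (R := ℝ)) this
    push_cast at this
    linarith
  have hAne : A.Nonempty := by
    rw [← Finset.card_pos]
    exact_mod_cast (mul_pos hε (by exact_mod_cast hX.card_pos)).trans_le hA
  have hlow : ∑ x ∈ A, (#(Y.filter (G.Adj x)) : ℝ) < ∑ _x ∈ A, (d - ε) * #Y :=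
    Finset.sum_lt_sum_of_nonempty hAne fun x hx => not_le.1 (Finset.mem_filter.1 hx).2
  have hAY : d - ε ≤ dens G A Y := by
    have := h A (Finset.filter_subset _ _) Y Finset.Subset.rfl hA
      (mul_le_of_le_one_left (Nat.cast_nonneg _) hε1)
    linarith [(abs_le.1 this).2]
  rw [← dens_mul_card_mul_card, Finset.sum_const, nsmul_eq_mul] at hlow
  nlinarith [mul_le_mul_of_nonneg_right hAY (by positivity : (0 : ℝ) ≤ #A * #Y)]

end

theorem stmt10_general {V : Type*} (G : SimpleGraph V) [DecidableRel G.Adj]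
    (ε : ℝ) (hε : 0 < ε) (hε2 : ε < 1/2) (X Y : Finset V)
    (n : ℕ) (hn : 0 < n) (hX : X.card = n) (hY : Y.card = n)
    (hreg : EpsRegular G ε X Y) (hd : 4 * ε < dens G X Y) :
    ∃ X' ⊆ X, ∃ Y' ⊆ Y, X'.card = Y'.card ∧ (1 - ε) * n < (X'.card : ℝ) ∧
      EpsRegular G (3 * ε) X' Y' ∧
      dens G X Y - ε ≤ dens G X' Y' ∧ dens G X' Y' ≤ dens G X Y + ε ∧
      (∀ x ∈ X', (dens G X' Y' - 3 * ε) * X'.card ≤ ((Y'.filter (G.Adj x)).card : ℝ)) ∧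
      (∀ y ∈ Y', (dens G X' Y' - 3 * ε) * Y'.card ≤ ((X'.filter (fun x => G.Adj x y)).card : ℝ)) := by
  have hXne : X.Nonempty := Finset.card_pos.1 (hX ▸ hn)
  have hYne : Y.Nonempty := Finset.card_pos.1 (hY ▸ hn)
  obtain ⟨X₀, hX₀X, hX₀big, hX₀deg⟩ :=
    hreg.exists_large_subset_forall_degree_ge hε (by linarith) hXne
  obtain ⟨Y₀, hY₀Y, hY₀big, hY₀deg⟩ :=
    hreg.symm.exists_large_subset_forall_degree_ge hε (by linarith) hYne
  obtain ⟨X', hX'X₀, hX'⟩ := Finset.exists_subset_card_eq (min_le_left #X₀ #Y₀)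
  obtain ⟨Y', hY'Y₀, hY'⟩ := Finset.exists_subset_card_eq (min_le_right #X₀ #Y₀)
  have hX'X := hX'X₀.trans hX₀X
  have hY'Y := hY'Y₀.trans hY₀Y
  have hXY : #X = #Y := hX.trans hY.symm
  have hXY' : #X' = #Y' := hX'.trans hY'.symm
  have hX'big : (1 - ε) * #X < (#X' : ℝ) := by
    rw [hX', Nat.cast_min]
    exact lt_min hX₀big (hXY ▸ hY₀big)
  have hY'big : (1 - ε) * #Y < (#Y' : ℝ) := hXY ▸ hXY' ▸ hX'big
  have large (k m : ℕ) (h : (1 - ε) * k < m) : ε * k ≤ m ∧ ε * k ≤ 3 * ε * m := by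
    have hk : (0 : ℝ) ≤ k := Nat.cast_nonneg k
    constructor <;> nlinarith [mul_lt_mul_of_pos_left h hε, mul_nonneg hε.le hk]
  have hX'large := large _ _ hX'big
  have hY'large := large _ _ hY'big
  have hclose := abs_le.1 <| hreg X' hX'X Y' hY'Y hX'large.1 hY'large.1
  refine ⟨X', hX'X, Y', hY'Y, hXY', hX ▸ hX'big,
    hreg.of_subset hX'X hY'Y hX'large.1 hY'large.1 hX'large.2 hY'large.2 (by linarith),
    by linarith, by linarith, fun x hx => ?_, fun y hy => ?_⟩
  · calc (dens G X' Y' - 3 * ε) * #X' ≤ (dens G X Y - 2 * ε) * #Y' := by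
          rw [hXY']; exact mul_le_mul_of_nonneg_right (by linarith) (Nat.cast_nonneg _)
      _ ≤ #(Y'.filter (G.Adj x)) :=
          le_card_filter_adj_of_subset G hY'Y hY'big (by linarith) (hX₀deg x (hX'X₀ hx))
  · calc (dens G X' Y' - 3 * ε) * #Y' ≤ (dens G X Y - 2 * ε) * #X' := by
          rw [hXY']; exact mul_le_mul_of_nonneg_right (by linarith) (Nat.cast_nonneg _)
      _ ≤ #(X'.filter (G.Adj y)) :=
          le_card_filter_adj_of_subset G hX'X hX'big (by linarith)
            (by simpa only [dens_comm G Y X] using hY₀deg y (hY'Y₀ hy))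
      _ = #(X'.filter fun x => G.Adj x y) := by simp only [G.adj_comm]

/-- An `ε`-regular pair of density `d > 4ε` contains a large super `3ε`-regular pair. -/
theorem stmt10 {V : Type*} (G : SimpleGraph V) [DecidableRel G.Adj]
    (ε : ℝ) (hε : 0 < ε) (hε2 : ε < 1/2) (X Y : Finset V) (hXY : Disjoint X Y)
    (n : ℕ) (hn : 0 < n) (hX : X.card = n) (hY : Y.card = n)
    (hreg : EpsRegular G ε X Y) (hd : 4 * ε < dens G X Y) :
    ∃ X' ⊆ X, ∃ Y' ⊆ Y, X'.card = Y'.card ∧ (1 - ε) * n < (X'.card : ℝ) ∧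
      EpsRegular G (3 * ε) X' Y' ∧
      dens G X Y - ε ≤ dens G X' Y' ∧ dens G X' Y' ≤ dens G X Y + ε ∧
      (∀ x ∈ X', (dens G X' Y' - 3 * ε) * X'.card ≤ ((Y'.filter (G.Adj x)).card : ℝ)) ∧
      (∀ y ∈ Y', (dens G X' Y' - 3 * ε) * Y'.card ≤ ((X'.filter (fun x => G.Adj x y)).card : ℝ)) :=
  stmt10_general G ε hε hε2 X Y n hn hX hY hreg hd
end

section
/- Let θ(n) denote the maximum interval thickness over all graphs on n vertices. Then θ(n) = o(n), i.e., for every δ > 0 there exists N such that θ(n) ≤ δn for all n ≥ N. -/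
/-!
Vertex-disjoint unions of complete bipartite graphs are interval colourable: colour `xy` by the
sum of the positions of `x` and `y` in their parts. By the Kővári–Sós–Turán bound, a graph with
at least `n² / s²` edges contains such a union of copies of `K_{t,t}`, `t = 8 s³`, with at least
`s n` edges, so `n / s + 1` interval colourable classes bring any graph down to `(n / s + 1)²`
edges. What is left has at most `2 (n / s + 1)` vertices of degree above `n / s`; their stars
are interval colourable and the remaining edges split greedily into `2 n / s + 1` matchings.
Altogether `θ(n) ≤ 5 n / s + 4`, and `s` can be taken as large as we like.
-/

open Finset SimpleGraph
open scoped Classical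

variable {V : Type*}

section Coloring

variable {G H : SimpleGraph V}

theorem intervalColorable_bot : IntervalColorable (⊥ : SimpleGraph V) :=
  ⟨fun _ => 0, by simp [IsIntervalColoring]⟩

theorem intervalColorable_of_edges_pairwise_disjoint
    (h : ∀ e ∈ G.edgeSet, ∀ f ∈ G.edgeSet, e ≠ f → ∀ v ∈ e, v ∉ f) : IntervalColorable G := by
  refine ⟨fun _ => 0, fun e he f hf hef ⟨v, hve, hvf⟩ => absurd hvf (h e he f hf hef v hve), ?_⟩
  rintro v x y z hxy hyz ⟨e, he, hve, rfl⟩ ⟨f, hf, hvf, rfl⟩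
  exact ⟨e, he, hve, le_antisymm hxy hyz⟩

lemma exists_neighbor_of_mem_edgeSet {e : Sym2 V} {v : V} (he : e ∈ G.edgeSet) (hv : v ∈ e) :
    ∃ w ∈ G.neighborSet v, e = s(v, w) := by
  obtain ⟨w, rfl⟩ := Sym2.mem_iff_exists.1 hv
  exact ⟨w, he, rfl⟩

theorem isIntervalColoring_add_of_bijOn (φ : V → ℕ)
    (hφ : ∀ v, ∃ d, Set.BijOn φ (G.neighborSet v) (Set.Iio d)) :
    IsIntervalColoring G (Sym2.lift ⟨fun x y => ((φ x + φ y : ℕ) : ℤ), fun x y => by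
      simp only [add_comm]⟩) := by
  constructor
  · rintro e he f hf hef ⟨v, hve, hvf⟩ hc
    obtain ⟨w, hw, rfl⟩ := exists_neighbor_of_mem_edgeSet he hve
    obtain ⟨w', hw', rfl⟩ := exists_neighbor_of_mem_edgeSet hf hvf
    obtain ⟨d, hd⟩ := hφ v
    simp only [Sym2.lift_mk, Nat.cast_inj, Nat.add_left_cancel_iff] at hc
    exact hef (by rw [hd.injOn hw hw' hc])
  · rintro v x y z hxy hyz ⟨e, he, hve, rfl⟩ ⟨f, hf, hvf, rfl⟩
    obtain ⟨w, hw, rfl⟩ := exists_neighbor_of_mem_edgeSet he hve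
    obtain ⟨w', hw', rfl⟩ := exists_neighbor_of_mem_edgeSet hf hvf
    obtain ⟨d, hd⟩ := hφ v
    have hw'd : φ w' < d := hd.mapsTo hw'
    simp only [Sym2.lift_mk, Nat.cast_add] at hxy hyz
    obtain ⟨u, hu, hφu⟩ := hd.surjOn (show (y - φ v).toNat ∈ Set.Iio d by
      simp only [Set.mem_Iio]; omega)
    exact ⟨s(v, u), hu, Sym2.mem_mk_left _ _, by simp only [Sym2.lift_mk]; omega⟩

theorem IntervalColorable.sup (hG : IntervalColorable G) (hH : IntervalColorable H)
    (hGH : Disjoint G.support H.support) : IntervalColorable (G ⊔ H) := by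
  obtain ⟨c, hc_proper, hc_interval⟩ := hG
  obtain ⟨c', hc'_proper, hc'_interval⟩ := hH
  have edge_off : ∀ {K : SimpleGraph V} {e v}, v ∉ K.support → v ∈ e → e ∉ K.edgeSet := by
    intro K e v hv hve he
    obtain ⟨w, -, rfl⟩ := exists_neighbor_of_mem_edgeSet he hve
    exact hv ⟨w, he⟩
  have local_G : ∀ {e v}, v ∈ G.support → v ∈ e → (e ∈ (G ⊔ H).edgeSet ↔ e ∈ G.edgeSet) :=
    fun hv hve => by
      rw [edgeSet_sup, Set.mem_union, or_iff_left (edge_off (Set.disjoint_left.1 hGH hv) hve)]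
  have local_H : ∀ {e v}, v ∉ G.support → v ∈ e → (e ∈ (G ⊔ H).edgeSet ↔ e ∈ H.edgeSet) :=
    fun hv hve => by rw [edgeSet_sup, Set.mem_union, or_iff_right (edge_off hv hve)]
  refine ⟨fun e => if e ∈ G.edgeSet then c e else c' e, ?_, ?_⟩
  · rintro e he f hf hef ⟨v, hve, hvf⟩
    by_cases hv : v ∈ G.support
    · rw [local_G hv hve] at he
      rw [local_G hv hvf] at hf
      simpa only [if_pos he, if_pos hf] using hc_proper e he f hf hef ⟨v, hve, hvf⟩
    · rw [local_H hv hve] at he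
      rw [local_H hv hvf] at hf
      simpa only [if_neg (edge_off hv hve), if_neg (edge_off hv hvf)] using
        hc'_proper e he f hf hef ⟨v, hve, hvf⟩
  · rintro v x y z hxy hyz ⟨e, he, hve, rfl⟩ ⟨f, hf, hvf, rfl⟩
    dsimp only at hxy hyz ⊢
    by_cases hv : v ∈ G.support
    · rw [local_G hv hve] at he
      rw [local_G hv hvf] at hf
      rw [if_pos he] at hxy
      rw [if_pos hf] at hyz
      obtain ⟨g, hg, hvg, rfl⟩ := hc_interval v _ y _ hxy hyz ⟨e, he, hve, rfl⟩ ⟨f, hf, hvf, rfl⟩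
      exact ⟨g, (local_G hv hvg).2 hg, hvg, if_pos hg⟩
    · rw [local_H hv hve] at he
      rw [local_H hv hvf] at hf
      rw [if_neg (edge_off hv hve)] at hxy
      rw [if_neg (edge_off hv hvf)] at hyz
      obtain ⟨g, hg, hvg, rfl⟩ := hc'_interval v _ y _ hxy hyz ⟨e, he, hve, rfl⟩ ⟨f, hf, hvf, rfl⟩
      exact ⟨g, (local_H hv hvg).2 hg, hvg, if_neg (edge_off hv hvg)⟩

end Coloring

section Biclique

noncomputable def Finset.rankIn (A : Finset V) (v : V) : ℕ :=
  if h : v ∈ A then A.equivFin ⟨v, h⟩ else 0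

lemma Finset.bijOn_rankIn (A : Finset V) : Set.BijOn A.rankIn A (Set.Iio #A) := by
  have rankIn_mk : ∀ v (h : v ∈ A), A.rankIn v = A.equivFin ⟨v, h⟩ := fun v h => dif_pos h
  refine ⟨fun v hv => ?_, fun v hv w hw hvw => ?_, fun m hm => ?_⟩
  · simp [rankIn_mk v hv]
  · rw [rankIn_mk v hv, rankIn_mk w hw, Fin.val_inj, A.equivFin.apply_eq_iff_eq] at hvw
    exact congrArg Subtype.val hvw
  · refine ⟨A.equivFin.symm ⟨m, hm⟩, (A.equivFin.symm ⟨m, hm⟩).2, ?_⟩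
    simp [rankIn_mk _ (A.equivFin.symm ⟨m, hm⟩).2]

namespace SimpleGraph

def biclique (S T : Finset V) : SimpleGraph V := fromRel fun x y => x ∈ S ∧ y ∈ T

variable {G : SimpleGraph V} {S T : Finset V}

lemma biclique_comm (S T : Finset V) : biclique S T = biclique T S := by
  ext x y
  simp only [biclique, fromRel_adj]
  tauto

lemma neighborSet_biclique_of_mem_left (hST : Disjoint S T) {v : V} (hv : v ∈ S) :
    (biclique S T).neighborSet v = T := by
  ext w
  have hvT : v ∉ T := Finset.disjoint_left.1 hST hv
  simp only [mem_neighborSet, biclique, fromRel_adj, Finset.mem_coe]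
  constructor
  · rintro ⟨-, ⟨-, hw⟩ | ⟨-, hvT'⟩⟩
    exacts [hw, absurd hvT' hvT]
  · intro hw
    exact ⟨fun h => hvT (h ▸ hw), Or.inl ⟨hv, hw⟩⟩

lemma neighborSet_biclique_of_notMem {v : V} (hS : v ∉ S) (hT : v ∉ T) :
    (biclique S T).neighborSet v = ∅ := by
  ext w
  simp only [mem_neighborSet, biclique, fromRel_adj, Set.mem_empty_iff_false, iff_false]
  tauto

theorem intervalColorable_biclique (hST : Disjoint S T) : IntervalColorable (biclique S T) := by
  refine ⟨_, isIntervalColoring_add_of_bijOn (S.rankIn + T.rankIn) fun v => ?_⟩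
  have rankIn_left : Set.EqOn S.rankIn (S.rankIn + T.rankIn) S := fun w hw => by
    simp [Finset.rankIn, Finset.disjoint_left.1 hST hw]
  have rankIn_right : Set.EqOn T.rankIn (S.rankIn + T.rankIn) T := fun w hw => by
    simp [Finset.rankIn, Finset.disjoint_right.1 hST hw]
  by_cases hS : v ∈ S
  · exact ⟨#T, neighborSet_biclique_of_mem_left hST hS ▸ T.bijOn_rankIn.congr rankIn_right⟩
  by_cases hT : v ∈ T
  · rw [biclique_comm]
    exact ⟨#S, neighborSet_biclique_of_mem_left hST.symm hT ▸ S.bijOn_rankIn.congr rankIn_left⟩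
  · exact ⟨0, by simp [neighborSet_biclique_of_notMem hS hT]⟩

lemma biclique_le (hG : G.IsCompleteBetween S T) : biclique S T ≤ G := by
  rintro x y ⟨-, ⟨hx, hy⟩ | ⟨hy, hx⟩⟩
  exacts [hG hx hy, (hG hy hx).symm]

lemma support_biclique_subset : (biclique S T).support ⊆ ↑(S ∪ T) := by
  rintro v ⟨w, -, ⟨hv, -⟩ | ⟨-, hv⟩⟩ <;> simp [hv]

lemma card_mul_card_le_card_edgeFinset_biclique [Fintype V] (hST : Disjoint S T) :
    #S * #T ≤ #(biclique S T).edgeFinset := by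
  rw [← Finset.card_product]
  refine Finset.card_le_card_of_injOn (fun p => s(p.1, p.2)) (fun p hp => ?_) ?_
  · obtain ⟨hp1, hp2⟩ := Finset.mem_product.1 hp
    rw [Finset.mem_coe, mem_edgeFinset, mem_edgeSet]
    exact ⟨fun h => Finset.disjoint_left.1 hST hp1 (h ▸ hp2), Or.inl ⟨hp1, hp2⟩⟩
  · rintro ⟨x, y⟩ hxy ⟨x', y'⟩ hxy' h
    simp only [Finset.coe_product, Set.mem_prod, Finset.mem_coe] at hxy hxy'
    rcases Sym2.eq_iff.1 h with ⟨rfl, rfl⟩ | ⟨rfl, -⟩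
    · rfl
    · exact absurd hxy'.2 (Finset.disjoint_left.1 hST hxy.1)

lemma deleteIncidenceSet_eq_sdiff_biclique [Fintype V] (G : SimpleGraph V) (a : V) :
    G.deleteIncidenceSet a = G \ biclique {a} (G.neighborFinset a) := by
  ext x y
  simp only [deleteIncidenceSet_adj, sdiff_adj, biclique, fromRel_adj, Finset.mem_singleton,
    mem_neighborFinset]
  constructor
  · rintro ⟨hxy, hx, hy⟩
    exact ⟨hxy, by tauto⟩
  · rintro ⟨hxy, h⟩
    refine ⟨hxy, fun hx => h ⟨hxy.ne, Or.inl ⟨hx, hx ▸ hxy⟩⟩, fun hy => h ⟨hxy.ne, Or.inr ⟨hy, ?_⟩⟩⟩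
    exact hy ▸ hxy.symm

end SimpleGraph

end Biclique

section Thickness

variable {G : SimpleGraph V} {k l : ℕ}

theorem IntervalThicknessLE.mono (h : IntervalThicknessLE G k) (hkl : k ≤ l) :
    IntervalThicknessLE G l := by
  obtain ⟨f, hf⟩ := h
  refine ⟨fun e => Fin.castLE hkl (f e), fun i => ?_⟩
  by_cases hi : (i : ℕ) < k
  · convert hf ⟨i, hi⟩ using 4 with e
    simp [Fin.ext_iff]
  · convert (intervalColorable_bot : IntervalColorable (⊥ : SimpleGraph V))
    rw [← fromEdgeSet_empty]
    congr 1
    ext e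
    simp only [Set.mem_ofPred_eq, Set.mem_empty_iff_false, iff_false, not_and, Fin.ext_iff,
      Fin.val_castLE]
    exact fun _ h => hi (h ▸ (f e).isLt)

theorem IntervalThicknessLE.of_sdiff {B : SimpleGraph V} (hBG : B ≤ G) (hB : IntervalColorable B)
    (h : IntervalThicknessLE (G \ B) k) : IntervalThicknessLE G (k + 1) := by
  obtain ⟨f, hf⟩ := h
  refine ⟨fun e => if e ∈ B.edgeSet then Fin.last k else (f e).castSucc,
    Fin.lastCases ?_ fun j => ?_⟩
  · convert hB
    conv_rhs => rw [← fromEdgeSet_edgeSet B]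
    congr 1
    ext e
    by_cases he : e ∈ B.edgeSet
    · simp [he, edgeSet_mono hBG he]
    · simp [he, (Fin.castSucc_lt_last _).ne]
  · convert hf j using 4 with e
    by_cases he : e ∈ B.edgeSet
    · simp [he, (Fin.castSucc_lt_last _).ne']
    · simp [he, edgeSet_sdiff]

theorem intervalThicknessLE_of_edgeColoring (f : Sym2 V → Fin k)
    (hf : ∀ e ∈ G.edgeSet, ∀ e' ∈ G.edgeSet, e ≠ e' → f e = f e' → ∀ v ∈ e, v ∉ e') :
    IntervalThicknessLE G k := by
  refine ⟨f, fun i => intervalColorable_of_edges_pairwise_disjoint ?_⟩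
  simp only [edgeSet_fromEdgeSet]
  rintro e ⟨⟨he, rfl⟩, -⟩ e' ⟨⟨he', hfe'⟩, -⟩ hne
  exact hf e he e' he' hne hfe'.symm

end Thickness

section Greedy

/-- Greedy proper edge colouring: an edge meets at most `2D` others, so one of `2D + 1`
colours is always free. -/
theorem exists_edgeColoring_of_forall_card_le (E : Finset (Sym2 V)) (D : ℕ)
    (hE : ∀ v, #{e ∈ E | v ∈ e} ≤ D) :
    ∃ f : Sym2 V → Fin (2 * D + 1),
      ∀ e ∈ E, ∀ e' ∈ E, e ≠ e' → f e = f e' → ∀ v ∈ e, v ∉ e' := by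
  induction E using Finset.induction_on with
  | empty => exact ⟨fun _ => 0, by simp⟩
  | insert e E heE ih =>
    obtain ⟨f, hf⟩ := ih fun v =>
      (card_le_card (filter_subset_filter _ (subset_insert _ _))).trans (hE v)
    induction e using Sym2.ind with | h x y => ?_
    set blocked := ({e' ∈ E | x ∈ e'} ∪ {e' ∈ E | y ∈ e'}).image f
    have h_blocked : #blocked < #(univ : Finset (Fin (2 * D + 1))) := by
      have hx := (card_le_card (filter_subset_filter (x ∈ ·) (subset_insert s(x, y) E))).trans
        (hE x)
      have hy := (card_le_card (filter_subset_filter (y ∈ ·) (subset_insert s(x, y) E))).trans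
        (hE y)
      have : #blocked ≤ #{e' ∈ E | x ∈ e'} + #{e' ∈ E | y ∈ e'} :=
        card_image_le.trans (card_union_le _ _)
      simp only [card_univ, Fintype.card_fin]
      omega
    obtain ⟨i, -, hi⟩ := exists_mem_notMem_of_card_lt_card h_blocked
    have h_free : ∀ e' ∈ E, ∀ v ∈ s(x, y), v ∈ e' → f e' ≠ i := by
      rintro e' he' v hv hve' rfl
      refine hi (mem_image_of_mem f ?_)
      rcases Sym2.mem_iff.1 hv with rfl | rfl <;> simp [he', hve']
    refine ⟨Function.update f s(x, y) i, ?_⟩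
    intro e₁ he₁ e₂ he₂ hne hfe v hv₁ hv₂
    rw [mem_insert] at he₁ he₂
    rcases he₁ with rfl | he₁ <;> rcases he₂ with rfl | he₂
    · exact hne rfl
    · rw [Function.update_self, Function.update_of_ne (ne_of_mem_of_not_mem he₂ heE)] at hfe
      exact h_free e₂ he₂ v hv₁ hv₂ hfe.symm
    · rw [Function.update_self, Function.update_of_ne (ne_of_mem_of_not_mem he₁ heE)] at hfe
      exact h_free e₁ he₁ v hv₂ hv₁ hfe
    · rw [Function.update_of_ne (ne_of_mem_of_not_mem he₁ heE),
        Function.update_of_ne (ne_of_mem_of_not_mem he₂ heE)] at hfe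
      exact hf e₁ he₁ e₂ he₂ hne hfe v hv₁ hv₂

theorem intervalThicknessLE_of_forall_degree_le [Fintype V] {G : SimpleGraph V} {D : ℕ}
    (hG : ∀ v, G.degree v ≤ D) : IntervalThicknessLE G (2 * D + 1) := by
  obtain ⟨f, hf⟩ := exists_edgeColoring_of_forall_card_le G.edgeFinset D fun v => by
    rw [← incidenceFinset_eq_filter, card_incidenceFinset_eq_degree]
    exact hG v
  exact intervalThicknessLE_of_edgeColoring f fun e he e' he' =>
    hf e (mem_edgeFinset.2 he) e' (mem_edgeFinset.2 he')

end Greedy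

section Sparse

variable [Fintype V] {G : SimpleGraph V}

lemma card_filter_lt_degree_mul_le (D : ℕ) :
    #{v | D < G.degree v} * (D + 1) ≤ 2 * #G.edgeFinset := by
  rw [← sum_degrees_eq_twice_card_edges, ← smul_eq_mul]
  calc #{v | D < G.degree v} • (D + 1) ≤ ∑ v ∈ {v | D < G.degree v}, G.degree v :=
        card_nsmul_le_sum _ _ _ fun v hv => (mem_filter.1 hv).2
    _ ≤ ∑ v, G.degree v := sum_le_sum_of_subset (subset_univ _)

lemma filter_lt_degree_deleteIncidenceSet_subset (D : ℕ) (a : V) :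
    ({v | D < (G.deleteIncidenceSet a).degree v} : Finset V) ⊆
      ({v | D < G.degree v} : Finset V).erase a := by
  intro v hv
  have hv' := (mem_filter.1 hv).2
  have hv_supp := support_deleteIncidenceSet_subset G a
    ((degree_pos_iff_mem_support _ _).1 (Nat.zero_lt_of_lt hv'))
  refine mem_erase.2 ⟨fun hva => hv_supp.2 hva, mem_filter.2 ⟨mem_univ v, ?_⟩⟩
  exact hv'.trans_le (degree_le_of_le (deleteIncidenceSet_le G a))

theorem intervalThicknessLE_card_filter_lt_degree_add (D : ℕ) (G : SimpleGraph V) :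
    IntervalThicknessLE G (#{v | D < G.degree v} + (2 * D + 1)) := by
  suffices ∀ m (G : SimpleGraph V), #{v | D < G.degree v} ≤ m →
      IntervalThicknessLE G (m + (2 * D + 1)) from this _ G le_rfl
  intro m
  induction m with
  | zero =>
    intro G hG
    rw [Nat.zero_add]
    refine intervalThicknessLE_of_forall_degree_le fun v => not_lt.1 fun hv => ?_
    exact (card_pos.2 ⟨v, mem_filter.2 ⟨mem_univ v, hv⟩⟩).ne' (Nat.le_zero.1 hG)
  | succ m ih =>
    intro G hG
    by_cases hhigh : ∃ a, D < G.degree a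
    · obtain ⟨a, ha⟩ := hhigh
      have h_card := (card_le_card (filter_lt_degree_deleteIncidenceSet_subset D a)).trans_eq
        (card_erase_of_mem (mem_filter.2 ⟨mem_univ a, ha⟩))
      have h_biclique : biclique {a} (G.neighborFinset a) ≤ G :=
        biclique_le fun x hx y hy => by
          rw [Finset.coe_singleton, Set.mem_singleton_iff] at hx
          simpa [hx] using hy
      have h_rest := ih (G.deleteIncidenceSet a)
        ((le_of_eq (by congr!)).trans (h_card.trans (by omega)))
      rw [deleteIncidenceSet_eq_sdiff_biclique] at h_rest
      exact (h_rest.of_sdiff h_biclique (intervalColorable_biclique (by simp))).mono (by omega)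
    · simp only [not_exists, not_lt] at hhigh
      exact (intervalThicknessLE_of_forall_degree_le hhigh).mono (by omega)

theorem intervalThicknessLE_of_card_edgeFinset_le_sq {D : ℕ} (hG : #G.edgeFinset ≤ (D + 1) ^ 2) :
    IntervalThicknessLE G (4 * D + 3) := by
  have h_high : #{v | D < G.degree v} ≤ 2 * (D + 1) :=
    Nat.le_of_mul_le_mul_right (by nlinarith [card_filter_lt_degree_mul_le (G := G) D])
      D.succ_pos
  exact (intervalThicknessLE_card_filter_lt_degree_add D G).mono (by omega)

end Sparse

section KovariSosTuran

namespace SimpleGraph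

def HasBiclique (G : SimpleGraph V) (t : ℕ) : Prop :=
  ∃ S T : Finset V, #S = t ∧ #T = t ∧ G.IsCompleteBetween S T

variable [Fintype V] {G : SimpleGraph V} {t : ℕ}

/-- Double counting of pairs `(v, S)` with `S` a `t`-set of neighbours of `v`: a `t`-set has
fewer than `t` common neighbours in a `K_{t,t}`-free graph. -/
lemma card_filter_le_degree_mul_choose_le (hG : ¬ G.HasBiclique t) (a : ℕ) :
    #{v | a ≤ G.degree v} * a.choose t ≤ t * (Fintype.card V).choose t := by
  have key := card_nsmul_le_card_nsmul (s := {v | a ≤ G.degree v})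
    (t := powersetCard t (univ : Finset V)) (fun v S => S ⊆ G.neighborFinset v)
    (m := a.choose t) (n := t) ?_ ?_
  · simpa [card_powersetCard, mul_comm] using key
  · intro v hv
    calc a.choose t ≤ (G.degree v).choose t := Nat.choose_le_choose t (mem_filter.1 hv).2
      _ = #(powersetCard t (G.neighborFinset v)) := by
          rw [card_powersetCard, card_neighborFinset_eq_degree]
      _ ≤ _ := card_le_card fun S hS => by
          rw [mem_powersetCard] at hS
          simp [mem_powersetCard, hS.1, hS.2]
  · intro S hS
    by_contra! h_many
    obtain ⟨T, hT, hTcard⟩ := exists_subset_card_eq h_many.le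
    refine hG ⟨S, T, (mem_powersetCard.1 hS).2, hTcard, fun x hx y hy => ?_⟩
    have := (mem_bipartiteBelow _).1 (hT hy)
    exact (G.mem_neighborFinset y x).1 (this.2 hx) |>.symm

lemma two_mul_card_edgeFinset_le (a : ℕ) {h : ℕ} (hh : #{v | a ≤ G.degree v} ≤ h) :
    2 * #G.edgeFinset ≤ Fintype.card V * (h + a) := by
  rw [← sum_degrees_eq_twice_card_edges,
    ← sum_filter_add_sum_filter_not univ fun v => a ≤ G.degree v]
  have h_high := sum_le_card_nsmul {v | a ≤ G.degree v} (G.degree ·) (Fintype.card V)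
    fun v _ => (G.degree_lt_card_verts v).le
  have h_low := sum_le_card_nsmul {v | ¬a ≤ G.degree v} (G.degree ·) a
    fun v hv => (not_le.1 (mem_filter.1 hv).2).le
  have h_card : #({v | ¬a ≤ G.degree v} : Finset V) ≤ Fintype.card V := card_le_univ _
  simp only [smul_eq_mul] at h_high h_low
  nlinarith

end SimpleGraph

lemma Nat.mul_choose_lt_mul_choose (n t : ℕ) {c : ℕ} (hc : 0 < c) :
    t * n.choose t < (t * c ^ t + 1) * (n / c + t).choose t := by
  have h_pos : 0 < (n / c + t).descFactorial t :=
    Nat.descFactorial_pos.2 (Nat.le_add_left t _)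
  have h_low : (n / c + 1) ^ t ≤ (n / c + t).descFactorial t := by
    have := Nat.pow_sub_le_descFactorial (n / c + t) t
    rwa [Nat.add_right_comm, Nat.add_sub_cancel] at this
  have h_pow : n ^ t ≤ c ^ t * (n / c + 1) ^ t := by
    rw [← Nat.mul_pow]
    exact Nat.pow_le_pow_left (Nat.lt_mul_div_succ n hc).le t
  have h_desc : t * n.descFactorial t < (t * c ^ t + 1) * (n / c + t).descFactorial t :=
    calc t * n.descFactorial t ≤ t * (c ^ t * (n / c + t).descFactorial t) :=
          Nat.mul_le_mul_left t ((Nat.descFactorial_le_pow n t).trans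
            (h_pow.trans (Nat.mul_le_mul_left _ h_low)))
      _ < (t * c ^ t + 1) * (n / c + t).descFactorial t := by nlinarith
  rw [Nat.descFactorial_eq_factorial_mul_choose, Nat.descFactorial_eq_factorial_mul_choose]
    at h_desc
  exact Nat.lt_of_mul_lt_mul_left (a := t.factorial) (by nlinarith)

namespace SimpleGraph

variable [Fintype V] {G : SimpleGraph V} {t : ℕ}

/-- A Kővári–Sós–Turán bound. -/
theorem mul_card_edgeFinset_le_of_not_hasBiclique (hG : ¬ G.HasBiclique t) {c : ℕ} (hc : 0 < c) :
    c * (2 * #G.edgeFinset) ≤ Fintype.card V ^ 2 + c * Fintype.card V * (t * c ^ t + t) := by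
  set n := Fintype.card V
  have h_high : #{v | n / c + t ≤ G.degree v} ≤ t * c ^ t :=
    Nat.le_of_lt_succ <| Nat.lt_of_mul_lt_mul_right <|
      (card_filter_le_degree_mul_choose_le hG _).trans_lt (Nat.mul_choose_lt_mul_choose n t hc)
  have h_edges := two_mul_card_edgeFinset_le _ h_high
  have h_div : c * (n / c) ≤ n := Nat.mul_div_le n c
  calc c * (2 * #G.edgeFinset) ≤ c * (n * (t * c ^ t + (n / c + t))) :=
        Nat.mul_le_mul_left c h_edges
    _ = n * (c * (n / c)) + c * n * (t * c ^ t + t) := by ring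
    _ ≤ n ^ 2 + c * n * (t * c ^ t + t) := by nlinarith

end SimpleGraph

end KovariSosTuran

section Packing

namespace SimpleGraph

variable {G : SimpleGraph V}

lemma notMem_support_deleteEdges {X : Finset V} {x : V} (hx : x ∈ X) :
    x ∉ (G.deleteEdges {e | ∃ x ∈ X, x ∈ e}).support := by
  rintro ⟨w, hw⟩
  exact ((deleteEdges_adj ..).1 hw).2 ⟨x, hx, Sym2.mem_mk_left _ _⟩

variable [Fintype V]

lemma card_edgeFinset_sup_of_disjoint_support {H : SimpleGraph V}
    (hGH : Disjoint G.support H.support) :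
    #(G ⊔ H).edgeFinset = #G.edgeFinset + #H.edgeFinset := by
  rw [edgeFinset_sup, card_union_of_disjoint
    (disjoint_edgeFinset.2 (disjoint_of_disjoint_support _ hGH))]

lemma card_edgeFinset_le_card_edgeFinset_add {G₁ : SimpleGraph V} (X : Finset V)
    (hX : ∀ e ∈ G.edgeSet, e ∉ G₁.edgeSet → ∃ x ∈ X, x ∈ e) :
    #G.edgeFinset ≤ #G₁.edgeFinset + #X * Fintype.card V := by
  have h_sub : G.edgeFinset ⊆ G₁.edgeFinset ∪ X.biUnion (G.incidenceFinset ·) := by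
    intro e he
    rw [mem_edgeFinset] at he
    by_cases he₁ : e ∈ G₁.edgeSet
    · exact mem_union_left _ (mem_edgeFinset.2 he₁)
    · obtain ⟨x, hx, hxe⟩ := hX e he he₁
      exact mem_union_right _ (mem_biUnion.2 ⟨x, hx, (mem_incidenceFinset ..).2 ⟨he, hxe⟩⟩)
  calc #G.edgeFinset ≤ #G₁.edgeFinset + #(X.biUnion (G.incidenceFinset ·)) :=
        (card_le_card h_sub).trans (card_union_le _ _)
    _ ≤ #G₁.edgeFinset + #X * Fintype.card V := by
        refine Nat.add_le_add_left (card_biUnion_le.trans ?_) _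
        simpa using sum_le_card_nsmul X (fun x => #(G.incidenceFinset x)) (Fintype.card V)
          fun x _ => (card_incidenceFinset_eq_degree G x).trans_le (G.degree_lt_card_verts x).le

/-- Greedily remove vertex-disjoint copies of `K_{t,t}` until none is left. Each copy brings
`t²` edges into the interval colourable union `B` and destroys at most `2tn` edges of `G`. -/
theorem exists_intervalColorable_le_and_not_hasBiclique {t : ℕ} (ht : 0 < t)
    (G : SimpleGraph V) :
    ∃ B G' : SimpleGraph V, B ≤ G ∧ IntervalColorable B ∧ ¬ G'.HasBiclique t ∧
      t * #G.edgeFinset ≤ t * #G'.edgeFinset + 2 * Fintype.card V * #B.edgeFinset := by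
  induction hm : #G.edgeFinset using Nat.strong_induction_on generalizing G with
  | _ m ih =>
  by_cases hG : G.HasBiclique t
  swap
  · exact ⟨⊥, G, bot_le, intervalColorable_bot, hG, by simp [hm]⟩
  obtain ⟨S, T, hS, hT, hST⟩ := hG
  have h_disj : Disjoint S T := Finset.disjoint_coe.1 hST.disjoint
  set n := Fintype.card V
  obtain ⟨G₁, hG₁⟩ : ∃ G₁, G₁ = G.deleteEdges {e | ∃ x ∈ S ∪ T, x ∈ e} := ⟨_, rfl⟩
  have hG₁_le : G₁ ≤ G := hG₁ ▸ deleteEdges_le _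
  have hG₁_supp : ∀ v ∈ S ∪ T, v ∉ G₁.support := fun v hv => hG₁ ▸ notMem_support_deleteEdges hv
  obtain ⟨x, hx⟩ : S.Nonempty := card_pos.1 (hS ▸ ht)
  obtain ⟨y, hy⟩ : T.Nonempty := card_pos.1 (hT ▸ ht)
  have h_lt : G₁ < G := lt_of_le_of_ne hG₁_le fun h =>
    hG₁_supp x (mem_union_left T hx) (h ▸ (hST hx hy).mem_support_left)
  obtain ⟨B₁, G', hB₁, hB₁_col, hG', h_count⟩ :=
    ih _ (hm ▸ card_lt_card (edgeFinset_strict_mono h_lt)) G₁ rfl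
  have h_supp : Disjoint B₁.support (biclique S T).support :=
    Set.disjoint_right.2 fun v hv hv₁ =>
      hG₁_supp v (support_biclique_subset hv) (support_mono hB₁ hv₁)
  refine ⟨B₁ ⊔ biclique S T, G', sup_le (hB₁.trans hG₁_le) (biclique_le hST),
    hB₁_col.sup (intervalColorable_biclique h_disj) h_supp, hG', ?_⟩
  have h_B : #B₁.edgeFinset + t * t ≤ #(B₁ ⊔ biclique S T).edgeFinset := by
    have := card_mul_card_le_card_edgeFinset_biclique h_disj
    rw [hS, hT] at this
    rw [card_edgeFinset_sup_of_disjoint_support h_supp]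
    omega
  have h_del : m ≤ #G₁.edgeFinset + 2 * t * n := by
    refine hm ▸ (card_edgeFinset_le_card_edgeFinset_add (S ∪ T) fun e he he₁ => ?_).trans
      (Nat.add_le_add_left (Nat.mul_le_mul_right n ((card_union_le S T).trans (by omega))) _)
    rw [hG₁, edgeSet_deleteEdges] at he₁
    by_contra h
    exact he₁ ⟨he, h⟩
  have h_step := calc t * m ≤ t * (#G₁.edgeFinset + 2 * t * n) := Nat.mul_le_mul_left t h_del
    _ = t * #G₁.edgeFinset + 2 * n * (t * t) := by ring
    _ ≤ t * #G'.edgeFinset + 2 * n * (#B₁.edgeFinset + t * t) := by nlinarith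
  exact h_step.trans (Nat.add_le_add_left (Nat.mul_le_mul_left _ (h_B.trans_eq (by congr!))) _)

end SimpleGraph

end Packing

section Dense

variable [Fintype V]

/-- The Kővári–Sós–Turán bound with `c = s²` and `t = 8 s³` beats `n² / s²` edges from this
number of vertices on. -/
def denseThreshold (s : ℕ) : ℕ := 2 * s ^ 2 * (8 * s ^ 3 * (s ^ 2) ^ (8 * s ^ 3) + 8 * s ^ 3)

theorem exists_intervalColorable_le_of_sq_le {s : ℕ} (hs : 0 < s)
    (hn : denseThreshold s ≤ Fintype.card V) (G : SimpleGraph V)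
    (hG : Fintype.card V ^ 2 ≤ s ^ 2 * #G.edgeFinset) :
    ∃ B ≤ G, IntervalColorable B ∧ s * Fintype.card V ≤ #B.edgeFinset := by
  set n := Fintype.card V
  obtain ⟨B, G', hBG, hB, hG', h_pack⟩ :=
    exists_intervalColorable_le_and_not_hasBiclique (t := 8 * s ^ 3) (by positivity) G
  refine ⟨B, hBG, hB, ?_⟩
  have h_free := mul_card_edgeFinset_le_of_not_hasBiclique hG' (c := s ^ 2) (by positivity)
  rcases Nat.eq_zero_or_pos n with hn0 | hn0
  · simp [hn0]
  have h₁ := Nat.mul_le_mul_left (2 * s ^ 2) h_pack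
  have h₂ := Nat.mul_le_mul_left (8 * s ^ 3) h_free
  have h₃ := Nat.mul_le_mul_left (16 * s ^ 3) hG
  have h₄ := Nat.mul_le_mul_left (4 * s ^ 3 * n) hn
  unfold denseThreshold at h₄
  refine Nat.le_of_mul_le_mul_left (c := 4 * s ^ 2 * n) ?_ (by positivity)
  nlinarith

theorem intervalThicknessLE_add_of_exists_intervalColorable {m b k : ℕ}
    (hsparse : ∀ G : SimpleGraph V, #G.edgeFinset ≤ m → IntervalThicknessLE G k)
    (hdense : ∀ G : SimpleGraph V, m < #G.edgeFinset →
      ∃ B ≤ G, IntervalColorable B ∧ b ≤ #B.edgeFinset) (j : ℕ) :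
    ∀ G : SimpleGraph V, #G.edgeFinset ≤ m + j * b → IntervalThicknessLE G (k + j) := by
  induction j with
  | zero => simpa using hsparse
  | succ j ih =>
    intro G hG
    by_cases h_sparse : #G.edgeFinset ≤ m
    · exact (hsparse G h_sparse).mono (by omega)
    obtain ⟨B, hBG, hB, hb⟩ := hdense G (not_le.1 h_sparse)
    refine (ih (G \ B) ?_).of_sdiff hBG hB
    have h_card : #(G \ B).edgeFinset = #G.edgeFinset - #B.edgeFinset := by
      rw [edgeFinset_sdiff, card_sdiff_of_subset (edgeFinset_mono hBG)]
    rw [Nat.succ_mul] at hG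
    exact Eq.trans_le ((congr_arg _ (by congr!)).trans h_card) (by omega)

theorem intervalThicknessLE_five_mul_div_add_four {s : ℕ} (hs : 0 < s)
    (hn : denseThreshold s ≤ Fintype.card V) (G : SimpleGraph V) :
    IntervalThicknessLE G (5 * (Fintype.card V / s) + 4) := by
  set n := Fintype.card V
  set D := n / s
  have hnD : n < s * (D + 1) := Nat.lt_mul_div_succ n hs
  have h_sq : n ^ 2 ≤ s ^ 2 * (D + 1) ^ 2 := by
    rw [← Nat.mul_pow]
    exact Nat.pow_le_pow_left hnD.le 2
  have h_edges : #G.edgeFinset ≤ (D + 1) ^ 2 + (D + 1) * (s * n) :=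
    calc #G.edgeFinset ≤ n.choose 2 := card_edgeFinset_le_card_choose_two
      _ ≤ n ^ 2 := Nat.choose_le_pow n 2
      _ ≤ (D + 1) ^ 2 + (D + 1) * (s * n) := by nlinarith
  have h := intervalThicknessLE_add_of_exists_intervalColorable
    (fun G' hG' => intervalThicknessLE_of_card_edgeFinset_le_sq hG')
    (fun G' hG' => exists_intervalColorable_le_of_sq_le hs hn G' (by nlinarith)) (D + 1) G h_edges
  exact h.mono (by omega)

end Dense

/-- The maximum interval thickness of an `n`-vertex graph is `o(n)`. -/
theorem stmt13 (δ : ℝ) (hδ : 0 < δ) :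
    ∃ N : ℕ, ∀ n : ℕ, N ≤ n → ∀ G : SimpleGraph (Fin n),
      ∃ k : ℕ, (k : ℝ) ≤ δ * n ∧ IntervalThicknessLE G k := by
  set s := ⌈10 / δ⌉₊
  have hs : 0 < s := Nat.ceil_pos.2 (by positivity)
  refine ⟨max (denseThreshold s) ⌈8 / δ⌉₊, fun n hn G => ⟨5 * (n / s) + 4, ?_, ?_⟩⟩
  · have h_s : 10 ≤ s * δ := (div_le_iff₀ hδ).1 (Nat.le_ceil _)
    have h_n : 8 ≤ n * δ :=
      (div_le_iff₀ hδ).1 ((Nat.le_ceil _).trans (by exact_mod_cast le_of_max_le_right hn))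
    have h_div : (n : ℝ) / s ≤ δ * n / 10 := by
      rw [div_le_iff₀ (by positivity)]
      nlinarith [mul_le_mul_of_nonneg_left h_s (Nat.cast_nonneg (α := ℝ) n)]
    have := Nat.cast_div_le (α := ℝ) (m := n) (n := s)
    push_cast
    linarith
  · simpa using intervalThicknessLE_five_mul_div_add_four hs
      (by simpa using le_of_max_le_left hn) G
end
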